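/- Fix k ≥ 0 and let ϑ_r(x;y) = ∑_{i≥0} q_{r-i}(x) e_i(y) with y = (y_1,...,y_k). For every integer m > k, ϑ_m^2 = 2 ∑_{i=1}^{m} (-1)^{i+1} ϑ_{m+i} ϑ_{m-i}. -/

import Mathlib

/-- The value of the elementary symmetric polynomial `e_i(y)` in `k` variables. -/
def esymmVal {R : Type*} [CommRing R] {k : ℕ} (y : Fin k → R) (i : ℕ) : R :=
  ∑ s ∈ Finset.powersetCard i (Finset.univ : Finset (Fin k)), ∏ j ∈ s, y j

/-- `ϑ_r(x;y) = ∑_i q_{r-i}(x) e_i(y)`, where `q_j` is the `j`-th coefficient of `Q`. -/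
noncomputable def thetaNat {R : Type*} [CommRing R] {k : ℕ}
    (Q : PowerSeries R) (y : Fin k → R) (r : ℕ) : R :=
  ∑ i ∈ Finset.range (r + 1), PowerSeries.coeff (r - i) Q * esymmVal y i

/-!
With `A = ∏ (1 - xᵢ X)` the hypothesis reads `Q(X) A(X) = A(-X)`, so `Q(X) Q(-X) = 1`.
Hence the generating function `g = Q · ∏ (1 + yⱼ X)` of the `ϑ_r` satisfies
`g(X) g(-X) = ∏ (1 - yⱼ² X²)`, a polynomial of degree `2k`. For `m > k` its coefficient of
`X^(2m)`, which is `∑_{i ≤ 2m} (-1)^i ϑ_i ϑ_{2m-i}`, therefore vanishes; pairing the terms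
`i = m ± j` turns this sum into `(-1)^m (ϑ_m² - 2 ∑_{j=1}^m (-1)^(j+1) ϑ_{m+j} ϑ_{m-j})`.
-/

open PowerSeries Finset

namespace Finset

theorem sum_range_two_mul_add_one {M : Type*} [AddCommMonoid M] (f : ℕ → M) (m : ℕ) :
    ∑ i ∈ range (2 * m + 1), f i = f m + ∑ i ∈ Icc 1 m, (f (m + i) + f (m - i)) := by
  induction m generalizing f with
  | zero => simp
  | succ m ih =>
    rw [show 2 * (m + 1) + 1 = 2 * m + 1 + 1 + 1 by ring, sum_range_succ, sum_range_succ', ih,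
      sum_Icc_succ_top (by omega)]
    have hshift : ∀ i ∈ Icc 1 m, f (m + i + 1) + f (m - i + 1) = f (m + 1 + i) + f (m + 1 - i) := by
      intro i hi
      rw [mem_Icc] at hi
      rw [show m + i + 1 = m + 1 + i by omega, show m - i + 1 = m + 1 - i by omega]
    rw [sum_congr rfl hshift, show m + 1 + (m + 1) = 2 * m + 1 + 1 by ring, Nat.sub_self]
    abel

end Finset

namespace PowerSeries

variable {R : Type*}

section CommSemiring

variable [CommSemiring R]

theorem rescale_C (a b : R) : rescale a (C b) = C b := by
  ext n
  rw [coeff_rescale, coeff_C]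
  split_ifs with hn <;> simp [hn]

theorem prod_one_add_C_mul_X_pow {ι : Type*} (s : Finset ι) (z : ι → R) (p : ℕ) :
    ∏ j ∈ s, (1 + C (z j) * X ^ p) = ∑ t ∈ s.powerset, C (∏ j ∈ t, z j) * X ^ (p * #t) := by
  rw [prod_one_add]
  refine sum_congr rfl fun t _ => ?_
  rw [prod_mul_distrib, map_prod, prod_const, pow_mul]

theorem coeff_prod_one_add_C_mul_X {ι : Type*} (s : Finset ι) (z : ι → R) (i : ℕ) :
    coeff i (∏ j ∈ s, (1 + C (z j) * X)) = ∑ t ∈ powersetCard i s, ∏ j ∈ t, z j := by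
  rw [← pow_one X, prod_one_add_C_mul_X_pow, map_sum, powersetCard_eq_filter, sum_filter]
  simp only [coeff_C_mul_X_pow, one_mul, eq_comm]

theorem coeff_prod_one_add_C_mul_X_pow_eq_zero {ι : Type*} (s : Finset ι) (z : ι → R)
    {p d : ℕ} (hd : p * #s < d) : coeff d (∏ j ∈ s, (1 + C (z j) * X ^ p)) = 0 := by
  rw [prod_one_add_C_mul_X_pow, map_sum]
  refine sum_eq_zero fun t ht => ?_
  have : p * #t ≤ p * #s := Nat.mul_le_mul_left p (card_le_card (mem_powerset.1 ht))
  rw [coeff_C_mul_X_pow, if_neg (by omega)]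

end CommSemiring

section CommRing

variable [CommRing R]

theorem rescale_neg_one_rescale_neg_one (f : R⟦X⟧) : rescale (-1) (rescale (-1) f) = f := by
  rw [rescale_rescale, neg_one_mul, neg_neg, rescale_one, RingHom.id_apply]

theorem mul_rescale_neg_one_eq_one {Q A : R⟦X⟧} (hA : IsUnit (constantCoeff A))
    (hQ : Q * A = rescale (-1) A) : Q * rescale (-1) Q = 1 := by
  have hQ' : rescale (-1) Q * rescale (-1) A = A := by
    have := congrArg (rescale (-1)) hQ
    rwa [map_mul, rescale_neg_one_rescale_neg_one] at this
  have hunit : IsUnit (A * rescale (-1) A) := by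
    rw [isUnit_iff_constantCoeff, map_mul, ← coeff_zero_eq_constantCoeff_apply (rescale _ A),
      coeff_rescale, pow_zero, one_mul, coeff_zero_eq_constantCoeff_apply]
    exact hA.mul hA
  refine hunit.mul_right_cancel ?_
  calc Q * rescale (-1) Q * (A * rescale (-1) A)
      = (Q * A) * (rescale (-1) Q * rescale (-1) A) := by ring
    _ = 1 * (A * rescale (-1) A) := by rw [hQ, hQ']; ring

theorem coeff_two_mul_mul_rescale_neg_one (f : R⟦X⟧) (m : ℕ) :
    (-1) ^ m * coeff (2 * m) (f * rescale (-1) f) =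
      coeff m f ^ 2 - 2 * ∑ i ∈ Icc 1 m, (-1) ^ (i + 1) * coeff (m + i) f * coeff (m - i) f := by
  rw [coeff_mul,
    Nat.sum_antidiagonal_eq_sum_range_succ (fun a b => coeff a f * coeff b (rescale (-1) f)),
    sum_range_two_mul_add_one, mul_add, mul_sum, sub_eq_add_neg, mul_sum, ← sum_neg_distrib]
  congr 1
  · rw [coeff_rescale, show 2 * m - m = m by omega]
    ring_nf
    simp only [pow_mul', neg_one_sq, one_pow, mul_one]
  · refine sum_congr rfl fun i hi => ?_
    obtain ⟨j, rfl⟩ := Nat.exists_eq_add_of_le (mem_Icc.1 hi).2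
    simp only [coeff_rescale, show 2 * (i + j) - (i + j + i) = j by omega,
      Nat.add_sub_cancel_left, show 2 * (i + j) - j = i + j + i by omega]
    ring_nf
    simp only [pow_mul', neg_one_sq, one_pow, mul_one]
    ring

end CommRing

end PowerSeries

theorem thetaNat_eq_coeff {R : Type*} [CommRing R] {k : ℕ} (Q : R⟦X⟧) (y : Fin k → R) (r : ℕ) :
    thetaNat Q y r = coeff r (Q * ∏ j, (1 + C (y j) * X)) := by
  rw [mul_comm, coeff_mul,
    Nat.sum_antidiagonal_eq_sum_range_succ (fun a b => coeff a (∏ j, (1 + C (y j) * X)) * coeff b Q)]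
  refine sum_congr rfl fun i _ => ?_
  rw [coeff_prod_one_add_C_mul_X, mul_comm, esymmVal]

/-- for `m > k`, `ϑ_m² = 2 ∑_{i=1}^m (-1)^{i+1} ϑ_{m+i} ϑ_{m-i}`. -/
theorem stmt_2 {R : Type*} [CommRing R] (n k : ℕ) (x : Fin n → R) (y : Fin k → R)
    (Q : PowerSeries R)
    (hQ : Q * ∏ i : Fin n, (1 - PowerSeries.C (x i) * PowerSeries.X) =
          ∏ i : Fin n, (1 + PowerSeries.C (x i) * PowerSeries.X))
    (m : ℕ) (hm : k < m) :
    (thetaNat Q y m) ^ 2 =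
      2 * ∑ i ∈ Finset.Icc 1 m,
        (-1 : R) ^ (i + 1) * thetaNat Q y (m + i) * thetaNat Q y (m - i) := by
  have hQQ : Q * rescale (-1) Q = 1 := by
    refine mul_rescale_neg_one_eq_one (A := ∏ i, (1 - C (x i) * X)) ?_ ?_
    · simp [map_prod]
    · rw [hQ, map_prod]
      exact prod_congr rfl fun i _ => by simp [rescale_C]
  set E : R⟦X⟧ := ∏ j, (1 + C (y j) * X)
  have hE : E * rescale (-1) E = ∏ j, (1 + C (-y j ^ 2) * X ^ 2) := by
    simp only [E, map_prod, ← prod_mul_distrib]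
    refine prod_congr rfl fun j _ => ?_
    simp only [map_add, map_one, map_mul, map_neg, map_pow, rescale_C, rescale_neg_one_X]
    ring
  have hvanish : coeff (2 * m) ((Q * E) * rescale (-1) (Q * E)) = 0 := by
    rw [map_mul (rescale (-1 : R)), mul_mul_mul_comm, hQQ, one_mul, hE]
    exact coeff_prod_one_add_C_mul_X_pow_eq_zero _ _ (by simpa using hm)
  simp only [thetaNat_eq_coeff]
  rw [← sub_eq_zero, ← coeff_two_mul_mul_rescale_neg_one, hvanish, mul_zero]
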